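/- Let T_D be shifted exponential with rate λ_d > 0, shift c ≥ 0, independent of h-th order statistics T_N(h) of N i.i.d. shifted exponentials (rate λ_s, shift c). Then for t > c, P(T_D ≥ t, T_D < T_N(h)) = Σ_{j=0}^{h-1} B_{h,j}·λ_d·e^{-H_{h,j}(t-c)}/(U_{h,j}·H_{h,j}), where B_{h,j} = h·binom(N,h)·binom(h-1,j)·(-1)^j, U_{h,j} = N-h+1+j, and H_{h,j} = λ_s·U_{h,j} + λ_d. -/

import Mathlib

/-!
Conditioning on the deadline `D = x`, the event is `{fewer than h of the T i are ≤ x}`, whose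
probability under the product law is the binomial lower tail
`∑_{k<h} C(N,k) (1-q)^k q^(N-k)` with `q = exp (-λ_s (x - c))`. Differentiating in `q` makes this
sum telescope to `h C(N,h) (1-q)^(h-1) q^(N-h)`; expanding `(1-q)^(h-1)` and integrating back
from `0` writes the tail as `∑_j B_{h,j} q^{U_{h,j}} / U_{h,j}`. Each term, multiplied by the
deadline density, is an exponential of rate `H_{h,j}`, integrated over `[t, ∞)` in closed form.
-/

open MeasureTheory ProbabilityTheory Real

/-- The shifted exponential distribution with rate `l` and shift `c`:
density `l * exp (-l*(t-c))` for `t > c`, `0` otherwise. -/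
noncomputable def shiftedExp (l c : ℝ) : MeasureTheory.Measure ℝ :=
  MeasureTheory.volume.withDensity
    (fun t => ENNReal.ofReal (if c < t then l * Real.exp (-l * (t - c)) else 0))

/-- The `K`-th order statistic (K-th smallest value) of the family `T` evaluated at `ω`. -/
noncomputable def orderStat {Ω : Type*} {N : ℕ} (T : Fin N → Ω → ℝ) (K : ℕ) (ω : Ω) : ℝ :=
  sInf {x : ℝ | K ≤ Nat.card {i : Fin N // T i ω ≤ x}}

open Set

lemma lt_csInf_iff_notMem_of_isClosed {α : Type*} [ConditionallyCompleteLinearOrder α]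
    [TopologicalSpace α] [OrderTopology α] {s : Set α} (hc : IsClosed s) (hne : s.Nonempty)
    (hbdd : BddBelow s) (hup : IsUpperSet s) {x : α} : x < sInf s ↔ x ∉ s :=
  ⟨fun hx hxs => (csInf_le hbdd hxs).not_gt hx,
    fun hx => lt_of_not_ge fun hle => hx (hup hle (hc.csInf_mem hne hbdd))⟩

lemma prod_fst_preimage_inter {α β : Type*} [MeasurableSpace α] [MeasurableSpace β]
    (μ : Measure α) (ν : Measure β) [SFinite ν] {A : Set α} {s : Set (α × β)}
    (hA : MeasurableSet A) (hs : MeasurableSet s) :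
    μ.prod ν (Prod.fst ⁻¹' A ∩ s) = ∫⁻ x in A, ν (Prod.mk x ⁻¹' s) ∂μ := by
  rw [Measure.prod_apply ((measurable_fst hA).inter hs), ← lintegral_indicator hA]
  congr with x
  by_cases hx : x ∈ A <;> simp [hx, preimage]

section CountLE

variable {N : ℕ}

noncomputable def indicesLE (y : Fin N → ℝ) (x : ℝ) : Finset (Fin N) :=
  Finset.univ.filter fun i => y i ≤ x

noncomputable def countLE (y : Fin N → ℝ) (x : ℝ) : ℕ :=
  (indicesLE y x).card

lemma countLE_mono (y : Fin N → ℝ) : Monotone (countLE y) := fun _ _ hab =>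
  Finset.card_le_card (Finset.monotone_filter_right _ fun _ _ hi => le_trans hi hab)

lemma natCard_le_eq_countLE (y : Fin N → ℝ) (x : ℝ) :
    Nat.card {i : Fin N // y i ≤ x} = countLE y x := by
  rw [Nat.card_eq_fintype_card, Fintype.card_subtype, countLE, indicesLE]

lemma setOf_le_countLE_eq_biUnion (y : Fin N → ℝ) (h : ℕ) :
    {z | h ≤ countLE y z} = ⋃ s ∈ Finset.powersetCard h Finset.univ, ⋂ i ∈ s, Ici (y i) := by
  ext z
  simp only [mem_ofPred_eq, mem_iUnion, mem_iInter, mem_Ici, Finset.mem_powersetCard,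
    Finset.subset_univ, true_and, exists_prop]
  constructor
  · intro hz
    obtain ⟨s, hs, rfl⟩ := Finset.exists_subset_card_eq hz
    exact ⟨s, rfl, fun i hi => (Finset.mem_filter.1 (hs hi)).2⟩
  · rintro ⟨s, rfl, hs⟩
    exact Finset.card_le_card fun i hi => Finset.mem_filter.2 ⟨Finset.mem_univ i, hs i hi⟩

lemma isClosed_setOf_le_countLE (y : Fin N → ℝ) (h : ℕ) : IsClosed {z | h ≤ countLE y z} := by
  rw [setOf_le_countLE_eq_biUnion]
  exact isClosed_biUnion_finset fun s _ => isClosed_biInter fun i _ => isClosed_Ici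

lemma lt_orderStat_iff {Ω : Type*} (T : Fin N → Ω → ℝ) {h : ℕ} (hh : 1 ≤ h) (hhN : h ≤ N)
    (ω : Ω) (x : ℝ) : x < orderStat T h ω ↔ countLE (fun i => T i ω) x < h := by
  set y : Fin N → ℝ := fun i => T i ω
  have hne : {z | h ≤ countLE y z}.Nonempty := by
    obtain ⟨b, hb⟩ := (finite_range y).bddAbove
    refine ⟨b, hhN.trans_eq ?_⟩
    rw [countLE, indicesLE, Finset.filter_true_of_mem fun i _ => hb (mem_range_self i), Finset.card_univ,
      Fintype.card_fin]
  have hbdd : BddBelow {z | h ≤ countLE y z} := by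
    obtain ⟨b, hb⟩ := (finite_range y).bddBelow
    refine ⟨b, fun z hz => ?_⟩
    obtain ⟨i, hi⟩ := Finset.card_pos.1 (hh.trans hz)
    exact (hb (mem_range_self i)).trans (Finset.mem_filter.1 hi).2
  simp_rw [orderStat, natCard_le_eq_countLE (fun i => T i ω)]
  rw [lt_csInf_iff_notMem_of_isClosed (isClosed_setOf_le_countLE y h) hne hbdd
    fun a b hab ha => le_trans ha (countLE_mono y hab)]
  simp [y]

lemma measurable_countLE : Measurable fun p : ℝ × (Fin N → ℝ) => countLE p.2 p.1 := by
  simp_rw [countLE, indicesLE, Finset.card_filter]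
  exact Finset.measurable_sum _ fun i _ =>
    Measurable.ite (measurableSet_le ((measurable_pi_apply i).comp measurable_snd) measurable_fst)
      measurable_const measurable_const

lemma preimage_indicesLE_singleton (x : ℝ) (s : Finset (Fin N)) :
    (indicesLE · x) ⁻¹' {s} = univ.pi fun i => if i ∈ s then Iic x else Ioi x := by
  ext y
  simp only [indicesLE, mem_preimage, mem_singleton_iff, Finset.ext_iff, Finset.mem_filter,
    Finset.mem_univ, true_and, mem_pi, mem_univ, forall_const]
  refine forall_congr' fun i => ?_
  by_cases hi : i ∈ s <;> simp [hi]

lemma sum_filter_card_lt_eq_sum_choose {M : Type*} [AddCommMonoid M] (f : ℕ → M) (h : ℕ) :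
    ∑ s ∈ Finset.univ.filter (fun s : Finset (Fin N) => s.card < h), f s.card
      = ∑ k ∈ Finset.range h, N.choose k • f k := by
  rw [Finset.sum_filter, ← Finset.powerset_univ,
    Finset.sum_powerset_apply_card (fun m => if m < h then f m else 0), Finset.card_univ,
    Fintype.card_fin]
  simp_rw [smul_ite, smul_zero]
  rw [← Finset.sum_filter]
  refine Finset.sum_subset (fun m hm => by simp_all) fun m _ hm => ?_
  simp only [Finset.mem_filter, Finset.mem_range, Nat.lt_succ_iff, not_and] at *
  rw [Nat.choose_eq_zero_of_lt (by omega), zero_smul]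

lemma pi_setOf_countLE_lt (ν : Measure ℝ) [SigmaFinite ν] (h : ℕ) (x : ℝ) :
    Measure.pi (fun _ : Fin N => ν) {y | countLE y x < h}
      = ∑ k ∈ Finset.range h, N.choose k * ν (Iic x) ^ k * ν (Ioi x) ^ (N - k) := by
  have hfiber (s : Finset (Fin N)) : Measure.pi (fun _ : Fin N => ν) ((indicesLE · x) ⁻¹' {s})
      = ν (Iic x) ^ s.card * ν (Ioi x) ^ (N - s.card) := by
    rw [preimage_indicesLE_singleton, Measure.pi_pi]
    simp_rw [apply_ite ν]
    rw [Finset.prod_ite, Finset.prod_const, Finset.prod_const]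
    have hcard := Finset.card_filter_add_card_filter_not (s := Finset.univ) (· ∈ s)
    rw [Finset.filter_mem_eq_inter, Finset.univ_inter, Finset.card_univ, Fintype.card_fin] at *
    rw [← Nat.eq_sub_of_add_eq' hcard]
  have hset : {y : Fin N → ℝ | countLE y x < h}
      = (indicesLE · x) ⁻¹' ↑(Finset.univ.filter fun s : Finset (Fin N) => s.card < h) := by
    ext y; simp [countLE]
  rw [hset, ← sum_measure_preimage_singleton _ fun s _ => by
    rw [preimage_indicesLE_singleton]
    exact MeasurableSet.univ_pi fun i => by
      split_ifs; exacts [measurableSet_Iic, measurableSet_Ioi]]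
  simp_rw [hfiber, sum_filter_card_lt_eq_sum_choose (fun k => ν (Iic x) ^ k * ν (Ioi x) ^ (N - k)),
    nsmul_eq_mul, mul_assoc]

end CountLE

section BinomialTail

lemma hasDerivAt_sum_choose_mul_pow (N h : ℕ) (q : ℝ) :
    HasDerivAt (fun q : ℝ => ∑ k ∈ Finset.range h, (N.choose k : ℝ) * (1 - q) ^ k * q ^ (N - k))
      (h * N.choose h * (1 - q) ^ (h - 1) * q ^ (N - h)) q := by
  set a : ℕ → ℝ := fun k => k * N.choose k * (1 - q) ^ (k - 1) * q ^ (N - k)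
  have hterm (k : ℕ) : HasDerivAt (fun q : ℝ => (N.choose k : ℝ) * (1 - q) ^ k * q ^ (N - k))
      (a (k + 1) - a k) q := by
    have hpow := (hasDerivAt_pow k (1 - q)).comp q ((hasDerivAt_id q).const_sub 1)
    refine ((hpow.const_mul (N.choose k : ℝ)).mul (hasDerivAt_pow (N - k) q)).congr_deriv ?_
    have hchoose : ((k + 1 : ℕ) : ℝ) * N.choose (k + 1) = N.choose k * (N - k : ℕ) := by
      exact_mod_cast (mul_comm _ _).trans (Nat.choose_succ_right_eq N k)
    simp only [a, Nat.add_sub_cancel, Nat.sub_sub, Function.comp_apply]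
    linear_combination -(1 - q) ^ k * q ^ (N - (k + 1)) * hchoose
  refine (HasDerivAt.fun_sum fun k _ => hterm k).congr_deriv ?_
  rw [Finset.sum_range_sub]
  simp [a]

lemma hasDerivAt_sum_mul_pow_div (b : ℕ → ℝ) (n h : ℕ) (q : ℝ) :
    HasDerivAt (fun q : ℝ => ∑ j ∈ Finset.range h, b j * q ^ (n + 1 + j) / (n + 1 + j : ℕ))
      (∑ j ∈ Finset.range h, b j * q ^ (n + j)) q := by
  refine HasDerivAt.fun_sum fun j _ => ?_
  refine (((hasDerivAt_pow (n + 1 + j) q).const_mul (b j)).div_const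
    ((n + 1 + j : ℕ) : ℝ)).congr_deriv ?_
  rw [show n + 1 + j - 1 = n + j by omega]
  field_simp

lemma sum_choose_mul_pow_eq (N h : ℕ) (hh : 1 ≤ h) (hhN : h ≤ N) (q : ℝ) :
    ∑ k ∈ Finset.range h, (N.choose k : ℝ) * (1 - q) ^ k * q ^ (N - k)
      = ∑ j ∈ Finset.range h, ((h : ℝ) * N.choose h * (h - 1).choose j * (-1) ^ j)
          * q ^ (N - h + 1 + j) / (N - h + 1 + j : ℕ) := by
  set F := fun q : ℝ => ∑ k ∈ Finset.range h, (N.choose k : ℝ) * (1 - q) ^ k * q ^ (N - k)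
  set G := fun q : ℝ => ∑ j ∈ Finset.range h, ((h : ℝ) * N.choose h * (h - 1).choose j * (-1) ^ j)
          * q ^ (N - h + 1 + j) / (N - h + 1 + j : ℕ)
  have hG (x : ℝ) : HasDerivAt G (h * N.choose h * (1 - x) ^ (h - 1) * x ^ (N - h)) x := by
    refine (hasDerivAt_sum_mul_pow_div _ (N - h) h x).congr_deriv ?_
    obtain ⟨m, rfl⟩ := Nat.exists_eq_add_of_le' hh
    rw [Nat.add_sub_cancel, sub_eq_neg_add, add_pow, Finset.mul_sum, Finset.sum_mul]
    refine Finset.sum_congr rfl fun j _ => ?_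
    rw [pow_add, neg_pow]
    ring
  have hderiv (x : ℝ) : HasDerivAt (F - G) 0 x := by
    simpa using (hasDerivAt_sum_choose_mul_pow N h x).sub (hG x)
  have hF0 : F 0 = 0 :=
    Finset.sum_eq_zero fun k hk => by simp [zero_pow (by grind : N - k ≠ 0)]
  have hG0 : G 0 = 0 := by simp [G]
  have := is_const_of_deriv_eq_zero (fun x => (hderiv x).differentiableAt)
    (fun x => (hderiv x).deriv) q 0
  simpa only [Pi.sub_apply, hF0, hG0, sub_zero, sub_eq_zero] using this

end BinomialTail

section ShiftedExponential

lemma integrableOn_exp_neg_mul_sub_Ioi {a : ℝ} (ha : 0 < a) (c b : ℝ) :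
    IntegrableOn (fun x => exp (-a * (x - c))) (Ioi b) := by
  have hint : IntegrableOn (fun x => exp (a * c) * exp (-a * x)) (Ioi b) :=
    (integrableOn_exp_mul_Ioi (neg_lt_zero.2 ha) b).const_mul _
  refine hint.congr_fun (fun x _ => ?_) measurableSet_Ioi
  simp only [← exp_add]; ring_nf

lemma integral_exp_neg_mul_sub_Ioi {a : ℝ} (ha : 0 < a) (c b : ℝ) :
    ∫ x in Ioi b, exp (-a * (x - c)) = exp (-a * (b - c)) / a := by
  have hsplit (x : ℝ) : exp (-a * (x - c)) = exp (a * c) * exp (-a * x) := by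
    rw [← exp_add]; ring_nf
  simp_rw [hsplit, integral_const_mul, integral_exp_mul_Ioi (neg_lt_zero.2 ha)]
  field_simp

lemma integral_Ici_sum_mul_exp {ι : Type*} (s : Finset ι) (b a : ι → ℝ)
    (ha : ∀ j ∈ s, 0 < a j) (c t : ℝ) :
    ∫ x in Ici t, ∑ j ∈ s, b j * exp (-a j * (x - c))
      = ∑ j ∈ s, b j * (exp (-a j * (t - c)) / a j) := by
  rw [integral_Ici_eq_integral_Ioi, integral_finsetSum _ fun j hj =>
    (integrableOn_exp_neg_mul_sub_Ioi (ha j hj) c t).const_mul _]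
  exact Finset.sum_congr rfl fun j hj => by
    rw [integral_const_mul, integral_exp_neg_mul_sub_Ioi (ha j hj)]

lemma shiftedExp_Ioi {l : ℝ} (hl : 0 < l) {c b : ℝ} (hcb : c ≤ b) :
    shiftedExp l c (Ioi b) = ENNReal.ofReal (exp (-l * (b - c))) := by
  rw [shiftedExp, withDensity_apply _ measurableSet_Ioi,
    setLIntegral_congr_fun measurableSet_Ioi
      (g := fun x => ENNReal.ofReal (l * exp (-l * (x - c))))
      (fun x hx => by rw [if_pos (hcb.trans_lt hx)]),
    ← ofReal_integral_eq_lintegral_ofReal ((integrableOn_exp_neg_mul_sub_Ioi hl c b).const_mul l)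
      (ae_of_all _ fun x => by positivity),
    integral_const_mul, integral_exp_neg_mul_sub_Ioi hl, mul_div_cancel₀ _ hl.ne']

lemma shiftedExp_Iic_self (l c : ℝ) : shiftedExp l c (Iic c) = 0 := by
  rw [shiftedExp, withDensity_apply _ measurableSet_Iic]
  exact (setLIntegral_congr_fun measurableSet_Iic
    (fun x hx => by rw [if_neg (not_lt.2 hx), ENNReal.ofReal_zero])).trans lintegral_zero

lemma isProbabilityMeasure_shiftedExp {l : ℝ} (hl : 0 < l) (c : ℝ) :
    IsProbabilityMeasure (shiftedExp l c) := by
  constructor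
  rw [← Iic_union_Ioi (a := c), measure_union (Iic_disjoint_Ioi le_rfl) measurableSet_Ioi,
    shiftedExp_Iic_self, shiftedExp_Ioi hl le_rfl]
  simp

lemma shiftedExp_Iic {l : ℝ} (hl : 0 < l) {c b : ℝ} (hcb : c ≤ b) :
    shiftedExp l c (Iic b) = ENNReal.ofReal (1 - exp (-l * (b - c))) := by
  have := isProbabilityMeasure_shiftedExp hl c
  rw [← compl_Ioi, prob_compl_eq_one_sub measurableSet_Ioi, shiftedExp_Ioi hl hcb,
    ENNReal.ofReal_sub _ (exp_nonneg _), ENNReal.ofReal_one]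

lemma setIntegral_shiftedExp {l c t : ℝ} (hl : 0 ≤ l) (hct : c < t) (g : ℝ → ℝ) :
    ∫ x in Ici t, g x ∂shiftedExp l c = ∫ x in Ici t, l * exp (-l * (x - c)) * g x := by
  rw [shiftedExp, restrict_withDensity measurableSet_Ici,
    integral_withDensity_eq_integral_toReal_smul
      ((Measurable.ite measurableSet_Ioi (by fun_prop) measurable_const).ennreal_ofReal)
      (ae_of_all _ fun _ => ENNReal.ofReal_lt_top)]
  refine setIntegral_congr_fun measurableSet_Ici fun x hx => ?_
  rw [if_pos (hct.trans_le hx), ENNReal.toReal_ofReal (by positivity), smul_eq_mul]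

end ShiftedExponential

lemma toReal_pi_shiftedExp_setOf_countLE_lt {N : ℕ} {l c x : ℝ} (hl : 0 < l) (hcx : c ≤ x)
    (h : ℕ) : (Measure.pi (fun _ : Fin N => shiftedExp l c) {y | countLE y x < h}).toReal
      = ∑ k ∈ Finset.range h,
          (N.choose k : ℝ) * (1 - exp (-l * (x - c))) ^ k * exp (-l * (x - c)) ^ (N - k) := by
  have := isProbabilityMeasure_shiftedExp hl c
  have hq : exp (-l * (x - c)) ≤ 1 := exp_le_one_iff.2 (by nlinarith)
  rw [pi_setOf_countLE_lt, shiftedExp_Iic hl hcx, shiftedExp_Ioi hl hcx,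
    ENNReal.toReal_sum fun k _ => by finiteness]
  simp only [ENNReal.toReal_mul, ENNReal.toReal_pow, ENNReal.toReal_natCast,
    ENNReal.toReal_ofReal (sub_nonneg.2 hq), ENNReal.toReal_ofReal (exp_nonneg _)]

lemma mul_sum_choose_exp_eq_sum_exp {N h : ℕ} (hh : 1 ≤ h) (hhN : h ≤ N) (ls ld c x : ℝ) :
    ld * exp (-ld * (x - c)) * ∑ k ∈ Finset.range h,
        (N.choose k : ℝ) * (1 - exp (-ls * (x - c))) ^ k * exp (-ls * (x - c)) ^ (N - k)
      = ∑ j ∈ Finset.range h, ((h : ℝ) * N.choose h * (h - 1).choose j * (-1) ^ j)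
          * ld / ((N : ℝ) - h + 1 + j) * exp (-(ls * ((N : ℝ) - h + 1 + j) + ld) * (x - c)) := by
  rw [sum_choose_mul_pow_eq N h hh hhN, Finset.mul_sum]
  refine Finset.sum_congr rfl fun j _ => ?_
  have hU : ((N - h + 1 + j : ℕ) : ℝ) = N - h + 1 + j := by push_cast [Nat.cast_sub hhN]; ring
  rw [← exp_nat_mul, hU, show -(ls * (N - h + 1 + j) + ld) * (x - c)
    = -ld * (x - c) + (N - h + 1 + j) * (-ls * (x - c)) by ring, exp_add]
  ring

theorem prob_random_deadline_tail_and_lt_orderStat_general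
    {Ω : Type*} [MeasurableSpace Ω] (P : MeasureTheory.Measure Ω)
    (N h : ℕ) (hh : 1 ≤ h) (hhN : h ≤ N)
    (ls ld c t : ℝ) (hls : 0 < ls) (hld : 0 < ld) (ht : c < t)
    (T : Fin N → Ω → ℝ) (hT : ∀ i, Measurable (T i))
    (D : Ω → ℝ) (hD : Measurable D)
    (hlaw : MeasureTheory.Measure.map (fun ω => (D ω, fun i => T i ω)) P
      = (shiftedExp ld c).prod (MeasureTheory.Measure.pi (fun _ : Fin N => shiftedExp ls c))) :
    (P {ω | t ≤ D ω ∧ D ω < orderStat T h ω}).toReal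
      = ∑ j ∈ Finset.range h,
          ((h : ℝ) * (N.choose h : ℝ) * ((h - 1).choose j : ℝ) * (-1) ^ j)
            * ld * Real.exp (-(ls * ((N : ℝ) - h + 1 + j) + ld) * (t - c))
            / (((N : ℝ) - h + 1 + j) * (ls * ((N : ℝ) - h + 1 + j) + ld)) := by
  have := isProbabilityMeasure_shiftedExp hls c
  set S := {p : ℝ × (Fin N → ℝ) | countLE p.2 p.1 < h}
  have hS : MeasurableSet S := measurableSet_lt measurable_countLE measurable_const
  have hevent : {ω | t ≤ D ω ∧ D ω < orderStat T h ω}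
      = (fun ω => (D ω, fun i => T i ω)) ⁻¹' (Prod.fst ⁻¹' Ici t ∩ S) := by
    ext ω
    simp [S, lt_orderStat_iff T hh hhN]
  have hU (j : ℕ) : 0 < (N : ℝ) - h + 1 + j := by
    have : (h : ℝ) ≤ N := by exact_mod_cast hhN
    positivity
  rw [hevent, ← Measure.map_apply (hD.prodMk (measurable_pi_lambda _ hT))
      ((measurable_fst measurableSet_Ici).inter hS), hlaw,
    prod_fst_preimage_inter _ _ measurableSet_Ici hS,
    ← integral_toReal (measurable_measure_prodMk_left hS).aemeasurable
      (ae_of_all _ fun _ => measure_lt_top _ _),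
    setIntegral_shiftedExp hld.le ht,
    setIntegral_congr_fun measurableSet_Ici fun x hx => by
      rw [show Prod.mk x ⁻¹' S = {y | countLE y x < h} from rfl,
        toReal_pi_shiftedExp_setOf_countLE_lt hls (ht.le.trans hx),
        mul_sum_choose_exp_eq_sum_exp hh hhN],
    integral_Ici_sum_mul_exp _ _ _ fun j _ => by have := hU j; positivity]
  exact Finset.sum_congr rfl fun j _ => by rw [← div_div]; ring

theorem prob_random_deadline_tail_and_lt_orderStat
    {Ω : Type*} [MeasurableSpace Ω] (P : MeasureTheory.Measure Ω) [IsProbabilityMeasure P]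
    (N h : ℕ) (hh : 1 ≤ h) (hhN : h ≤ N)
    (ls ld c t : ℝ) (hls : 0 < ls) (hld : 0 < ld) (hc : 0 ≤ c) (ht : c < t)
    (T : Fin N → Ω → ℝ) (hT : ∀ i, Measurable (T i))
    (D : Ω → ℝ) (hD : Measurable D)
    (hlaw : MeasureTheory.Measure.map (fun ω => (D ω, fun i => T i ω)) P
      = (shiftedExp ld c).prod (MeasureTheory.Measure.pi (fun _ : Fin N => shiftedExp ls c))) :
    (P {ω | t ≤ D ω ∧ D ω < orderStat T h ω}).toReal
      = ∑ j ∈ Finset.range h,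
          ((h : ℝ) * (N.choose h : ℝ) * ((h - 1).choose j : ℝ) * (-1) ^ j)
            * ld * Real.exp (-(ls * ((N : ℝ) - h + 1 + j) + ld) * (t - c))
            / (((N : ℝ) - h + 1 + j) * (ls * ((N : ℝ) - h + 1 + j) + ld)) :=
  prob_random_deadline_tail_and_lt_orderStat_general P N h hh hhN ls ld c t hls hld ht T hT D hD
    hlaw
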